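/- arXiv:1901.09437 — 2 statements merged into one kernel-verified Lean document; each statement's English description precedes it below -/
import Mathlib

section
/- Let hᵢ, ∇fᵢ(x), ∇fᵢ(x*) ∈ R^d be fixed vectors, U a uniform random subset of τm blocks, and h⁺ = hᵢ + (∇fᵢ(x) − hᵢ)_U. Then E‖h⁺ − ∇fᵢ(x*)‖² = (1 − τ)‖hᵢ − ∇fᵢ(x*)‖² + τ‖∇fᵢ(x) − ∇fᵢ(x*)‖². -/
/-! Each coordinate of `h⁺ - s` equals that of `a - s` or of `h - s`, according to whether its
block is sampled. A fixed block lies in `C(m-1, k-1) = (k/m) C(m, k)` of the `k`-subsets, so it is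
sampled with probability `τ`, and averaging coordinatewise gives the identity. -/

open Finset

/-- `x_U`: keep the coordinates of `x` lying in blocks of `U`, zero the rest. -/
noncomputable def restr {d m : ℕ} (b : Fin d → Fin m) (U : Finset (Fin m))
    (x : EuclideanSpace ℝ (Fin d)) : EuclideanSpace ℝ (Fin d) :=
  (WithLp.equiv 2 (Fin d → ℝ)).symm (fun j => if b j ∈ U then x j else 0)

section UniformSubset

variable {α : Type*} [Fintype α] [DecidableEq α]

theorem card_filter_mem_powersetCard_univ_mul (i : α) (k : ℕ) :
    #{U ∈ powersetCard k univ | i ∈ U} * Fintype.card α = k * (Fintype.card α).choose k := by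
  rcases k with _ | k
  · simp
  · have hcount := card_filter_powersetCard_subset {i} univ (k + 1) (subset_univ _) (by simp)
    simp only [singleton_subset_iff, card_singleton, card_univ, add_tsub_cancel_right] at hcount
    have : Nonempty α := ⟨i⟩
    obtain ⟨n, hn⟩ := Nat.exists_eq_add_one_of_ne_zero (Fintype.card_ne_zero (α := α))
    rw [hcount, hn, Nat.add_sub_cancel, mul_comm, Nat.add_one_mul_choose_eq, mul_comm]

theorem inv_choose_mul_sum_powersetCard_ite_mem {k : ℕ} (hk : k ≤ Fintype.card α) (i : α)
    (x y : ℝ) :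
    ((Fintype.card α).choose k : ℝ)⁻¹ * ∑ U ∈ powersetCard k univ, (if i ∈ U then x else y)
      = (1 - k / Fintype.card α) * y + k / Fintype.card α * x := by
  have : Nonempty α := ⟨i⟩
  have hn : (Fintype.card α : ℝ) ≠ 0 := Nat.cast_ne_zero.2 Fintype.card_ne_zero
  have hC : ((Fintype.card α).choose k : ℝ) ≠ 0 := Nat.cast_ne_zero.2 (Nat.choose_pos hk).ne'
  have hmem : (#{U ∈ powersetCard k univ | i ∈ U} : ℝ) * Fintype.card α
      = k * (Fintype.card α).choose k := by
    exact_mod_cast card_filter_mem_powersetCard_univ_mul i k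
  have hnotMem : (#{U ∈ powersetCard k univ | i ∉ U} : ℝ)
      = (Fintype.card α).choose k - #{U ∈ powersetCard k univ | i ∈ U} := by
    rw [eq_sub_iff_add_eq, add_comm, ← card_univ, ← card_powersetCard]
    exact_mod_cast card_filter_add_card_filter_not _
  rw [sum_ite, sum_const, sum_const, nsmul_eq_mul, nsmul_eq_mul, hnotMem]
  field_simp
  linear_combination (x - y) * hmem

end UniformSubset

theorem restr_apply {d m : ℕ} (b : Fin d → Fin m) (U : Finset (Fin m))
    (x : EuclideanSpace ℝ (Fin d)) (j : Fin d) :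
    restr b U x j = if b j ∈ U then x j else 0 :=
  rfl

theorem norm_add_restr_sub_sq {d m : ℕ} (b : Fin d → Fin m) (U : Finset (Fin m))
    (h a s : EuclideanSpace ℝ (Fin d)) :
    ‖h + restr b U (a - h) - s‖ ^ 2
      = ∑ j, if b j ∈ U then (a j - s j) ^ 2 else (h j - s j) ^ 2 := by
  rw [EuclideanSpace.real_norm_sq_eq]
  refine sum_congr rfl fun j _ => ?_
  split_ifs with hj <;> simp [restr_apply, hj]

theorem stmt9_general {d m : ℕ} (b : Fin d → Fin m) (k : ℕ) (hkm : k ≤ m)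
    (τ : ℝ) (hτ : τ = (k : ℝ) / m)
    (h a s : EuclideanSpace ℝ (Fin d)) :
    ((m.choose k : ℝ))⁻¹ *
      ∑ U ∈ Finset.powersetCard k (Finset.univ : Finset (Fin m)),
        ‖h + restr b U (a - h) - s‖ ^ 2
      = (1 - τ) * ‖h - s‖ ^ 2 + τ * ‖a - s‖ ^ 2 := by
  have hkcard : k ≤ Fintype.card (Fin m) := by rwa [Fintype.card_fin]
  have hblock (j : Fin d) := inv_choose_mul_sum_powersetCard_ite_mem hkcard (b j)
    ((a j - s j) ^ 2) ((h j - s j) ^ 2)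
  simp only [Fintype.card_fin, ← hτ] at hblock
  simp only [norm_add_restr_sub_sq]
  simp only [EuclideanSpace.real_norm_sq_eq, PiLp.sub_apply]
  rw [sum_comm, mul_sum, mul_sum, mul_sum, ← sum_add_distrib]
  exact sum_congr rfl fun j _ => by rw [hblock, add_comm]

/-- For fixed vectors `hᵢ`, `a = ∇fᵢ(x)`, `s = ∇fᵢ(x*)` and `U` uniform over size-`τm`
block subsets, with `h⁺ = hᵢ + (a − hᵢ)_U`, we have
`E‖h⁺ − s‖² = (1 − τ)‖hᵢ − s‖² + τ‖a − s‖²`. -/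
theorem stmt9 {d m : ℕ} (b : Fin d → Fin m) (k : ℕ) (hk : 0 < k) (hkm : k ≤ m)
    (τ : ℝ) (hτ : τ = (k : ℝ) / m)
    (h a s : EuclideanSpace ℝ (Fin d)) :
    ((m.choose k : ℝ))⁻¹ *
      ∑ U ∈ Finset.powersetCard k (Finset.univ : Finset (Fin m)),
        ‖h + restr b U (a - h) - s‖ ^ 2
      = (1 - τ) * ‖h - s‖ ^ 2 + τ * ‖a - s‖ ^ 2 :=
  stmt9_general b k hkm τ hτ h a s
end

section
/- Let x ∈ R^d, a fixed index j sampled uniformly from {1,…,k}, a uniform random size-τm subset U of blocks independent of j, and define x⁺ = x − γ(∇φⱼ(x) − αⱼ + ᾱ)_U where ᾱ = (1/k)∑ⱼαⱼ. Assume each φⱼ is convex and L-smooth, φ = (1/k)∑ⱼφⱼ is minimized at x⋆ (so ∑ⱼ∇φⱼ(x⋆) = 0). Then E‖x⁺ − E x⁺‖² ≤ 2γ²τ(2L(φ(x) − φ(x⋆)) + (1/k)∑ⱼ‖αⱼ − ∇φⱼ(x⋆)‖²). -/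
open Finset
open scoped RealInnerProductSpace

theorem norm_add_sq_le_two_mul {E : Type*} [SeminormedAddCommGroup E] (a b : E) :
    ‖a + b‖ ^ 2 ≤ 2 * ‖a‖ ^ 2 + 2 * ‖b‖ ^ 2 :=
  calc ‖a + b‖ ^ 2 ≤ (‖a‖ + ‖b‖) ^ 2 := by gcongr; exact norm_add_le a b
    _ ≤ 2 * ‖a‖ ^ 2 + 2 * ‖b‖ ^ 2 := by linarith [add_sq_le (a := ‖a‖) (b := ‖b‖)]

section InnerProductSpace

variable {E : Type*} [NormedAddCommGroup E] [InnerProductSpace ℝ E]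

theorem sum_norm_sub_average_sq_le {ι : Type*} (s : Finset ι) (v : ι → E) (c : E) :
    ∑ i ∈ s, ‖v i - (#s : ℝ)⁻¹ • ∑ k ∈ s, v k‖ ^ 2 ≤ ∑ i ∈ s, ‖v i - c‖ ^ 2 := by
  rcases s.eq_empty_or_nonempty with rfl | hs
  · simp
  set μ := (#s : ℝ)⁻¹ • ∑ k ∈ s, v k
  have hdev : ∑ i ∈ s, (v i - μ) = 0 := by
    rw [sum_sub_distrib, sum_const, ← Nat.cast_smul_eq_nsmul ℝ, smul_smul,
      mul_inv_cancel₀ (by positivity), one_smul, sub_self]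
  calc ∑ i ∈ s, ‖v i - μ‖ ^ 2 ≤ ∑ i ∈ s, ‖v i - μ‖ ^ 2 + #s * ‖μ - c‖ ^ 2 :=
        le_add_of_nonneg_right (by positivity)
    _ = ∑ i ∈ s, (‖v i - μ‖ ^ 2 + 2 * ⟪v i - μ, μ - c⟫ + ‖μ - c‖ ^ 2) := by
        rw [sum_add_distrib, sum_add_distrib, ← mul_sum, ← sum_inner, hdev, inner_zero_left,
          sum_const, nsmul_eq_mul]
        ring
    _ = ∑ i ∈ s, ‖v i - c‖ ^ 2 := by
        refine sum_congr rfl fun i _ => ?_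
        rw [← norm_add_sq_real, sub_add_sub_cancel]

theorem sum_sum_norm_sub_average_sq_le {ι κ : Type*} (s : Finset ι) (t : Finset κ)
    (v : ι → κ → E) (c : E) :
    ∑ i ∈ s, ∑ j ∈ t, ‖v i j - ((#s : ℝ) * #t)⁻¹ • ∑ i' ∈ s, ∑ j' ∈ t, v i' j'‖ ^ 2
      ≤ ∑ i ∈ s, ∑ j ∈ t, ‖v i j - c‖ ^ 2 := by
  simpa only [sum_product, card_product, Nat.cast_mul] using
    sum_norm_sub_average_sq_le (s ×ˢ t) (fun p => v p.1 p.2) c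

theorem norm_sub_sq_le_of_convex_of_smooth {L : ℝ} (hL : 0 < L) {f : E → ℝ} {g : E → E}
    (hconv : ∀ x y, f y + ⟪g y, x - y⟫ ≤ f x)
    (hsmooth : ∀ x y, f x ≤ f y + ⟪g y, x - y⟫ + L / 2 * ‖x - y‖ ^ 2) (x y : E) :
    ‖g x - g y‖ ^ 2 ≤ 2 * L * (f x - f y - ⟪g y, x - y⟫) := by
  set w := g x - g y
  have hw : ⟪g x, w⟫ - ⟪g y, w⟫ = ‖w‖ ^ 2 := by
    rw [← inner_sub_left, real_inner_self_eq_norm_sq]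
  -- evaluate convexity (from `y`) and smoothness (from `x`) at the point `x - L⁻¹ • w`
  have hsm := hsmooth (x - L⁻¹ • w) x
  have hcv := hconv (x - L⁻¹ • w) y
  rw [sub_sub_cancel_left, inner_neg_right, real_inner_smul_right, norm_neg, norm_smul,
    Real.norm_of_nonneg (inv_nonneg.2 hL.le), mul_pow] at hsm
  rw [sub_right_comm, inner_sub_right, real_inner_smul_right] at hcv
  have hL' : L / 2 * (L⁻¹ ^ 2 * ‖w‖ ^ 2) = L⁻¹ * ‖w‖ ^ 2 / 2 := by field_simp
  have key : L⁻¹ * ‖w‖ ^ 2 ≤ 2 * (f x - f y - ⟪g y, x - y⟫) := by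
    linear_combination 2 * hcv + 2 * hsm + 2 * hL' - 2 * L⁻¹ * hw
  calc ‖w‖ ^ 2 = L * (L⁻¹ * ‖w‖ ^ 2) := by field_simp
    _ ≤ 2 * L * (f x - f y - ⟪g y, x - y⟫) := by nlinarith

theorem sum_norm_saga_sq_le {ι : Type*} [Fintype ι] {L : ℝ} (hL : 0 < L)
    (f : ι → E → ℝ) (g : ι → E → E)
    (hconv : ∀ j x y, f j y + ⟪g j y, x - y⟫ ≤ f j x)
    (hsmooth : ∀ j x y, f j x ≤ f j y + ⟪g j y, x - y⟫ + L / 2 * ‖x - y‖ ^ 2)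
    (α : ι → E) (x xstar : E) (hopt : ∑ j, g j xstar = 0) :
    ∑ j, ‖g j x - α j + (Fintype.card ι : ℝ)⁻¹ • ∑ j', α j'‖ ^ 2
      ≤ 2 * (2 * L * (∑ j, f j x - ∑ j, f j xstar)) + 2 * ∑ j, ‖α j - g j xstar‖ ^ 2 := by
  set ᾱ := (Fintype.card ι : ℝ)⁻¹ • ∑ j', α j'
  have hgrad : ∑ j, ‖g j x - g j xstar‖ ^ 2 ≤ 2 * L * (∑ j, f j x - ∑ j, f j xstar) :=
    calc ∑ j, ‖g j x - g j xstar‖ ^ 2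
        ≤ ∑ j, 2 * L * (f j x - f j xstar - ⟪g j xstar, x - xstar⟫) :=
          sum_le_sum fun j _ =>
            norm_sub_sq_le_of_convex_of_smooth hL (hconv j) (hsmooth j) x xstar
      _ = 2 * L * (∑ j, f j x - ∑ j, f j xstar) := by
          rw [← mul_sum, sum_sub_distrib, sum_sub_distrib, ← sum_inner, hopt,
            inner_zero_left, sub_zero]
  -- `-ᾱ` is the average of the `g j xstar - α j`, since the `g j xstar` sum to zero
  have hbias : ∑ j, ‖g j xstar - α j + ᾱ‖ ^ 2 ≤ ∑ j, ‖α j - g j xstar‖ ^ 2 := by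
    have h := sum_norm_sub_average_sq_le univ (fun j => g j xstar - α j) 0
    simpa only [sum_sub_distrib, hopt, zero_sub, smul_neg, card_univ, sub_neg_eq_add,
      sub_zero, norm_sub_rev (g _ xstar)] using h
  calc ∑ j, ‖g j x - α j + ᾱ‖ ^ 2
      ≤ ∑ j, (2 * ‖g j x - g j xstar‖ ^ 2 + 2 * ‖g j xstar - α j + ᾱ‖ ^ 2) :=
        sum_le_sum fun j _ => by
          have h := norm_add_sq_le_two_mul (g j x - g j xstar) (g j xstar - α j + ᾱ)
          rwa [← add_assoc, sub_add_sub_cancel] at h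
    _ ≤ 2 * (2 * L * (∑ j, f j x - ∑ j, f j xstar)) + 2 * ∑ j, ‖α j - g j xstar‖ ^ 2 := by
        rw [sum_add_distrib, ← mul_sum, ← mul_sum]
        linarith

end InnerProductSpace

theorem card_filter_mem_powersetCard {α : Type*} [DecidableEq α] {s : Finset α} {a : α}
    (ha : a ∈ s) {k : ℕ} (hk : 0 < k) :
    #{U ∈ s.powersetCard k | a ∈ U} = (#s - 1).choose (k - 1) := by
  rw [← card_erase_of_mem ha, ← card_powersetCard]
  refine card_nbij' (·.erase a) (insert a) (fun U hU => ?_) (fun V hV => ?_)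
    (fun U hU => insert_erase (mem_filter.1 hU).2)
    (fun V hV => erase_insert (notMem_mono (mem_powersetCard.1 hV).1 (notMem_erase a s)))
  · simp only [mem_coe, mem_filter, mem_powersetCard] at hU ⊢
    exact ⟨erase_subset_erase a hU.1.1, by rw [card_erase_of_mem hU.2, hU.1.2]⟩
  · simp only [mem_coe, mem_filter, mem_powersetCard] at hV ⊢
    have haV : a ∉ V := notMem_mono hV.1 (notMem_erase a s)
    exact ⟨⟨insert_subset ha (hV.1.trans (erase_subset a s)),
      by rw [card_insert_of_notMem haV, hV.2]; omega⟩, mem_insert_self a V⟩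

theorem cast_choose_pred_div_cast_choose {n k : ℕ} (hk : 0 < k) (hkn : k ≤ n) :
    ((n - 1).choose (k - 1) : ℝ) / n.choose k = k / n := by
  obtain ⟨n, rfl⟩ : ∃ n', n = n' + 1 := ⟨n - 1, by omega⟩
  obtain ⟨k, rfl⟩ : ∃ k', k = k' + 1 := ⟨k - 1, by omega⟩
  have h : ((n : ℝ) + 1) * n.choose k = (n + 1).choose (k + 1) * (k + 1) := by
    exact_mod_cast Nat.add_one_mul_choose_eq n k
  rw [div_eq_div_iff (by exact_mod_cast (Nat.choose_pos hkn).ne') (by positivity)]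
  push_cast
  linear_combination h

section BlockRestriction

variable {d m : ℕ} (b : Fin d → Fin m)

theorem norm_restr_sq (U : Finset (Fin m)) (v : EuclideanSpace ℝ (Fin d)) :
    ‖restr b U v‖ ^ 2 = ∑ i, if b i ∈ U then v i ^ 2 else 0 := by
  rw [EuclideanSpace.norm_sq_eq]
  refine sum_congr rfl fun i _ => ?_
  simp only [restr, WithLp.equiv_symm_apply, PiLp.toLp_apply, Real.norm_eq_abs, sq_abs]
  split_ifs <;> simp

theorem sum_powersetCard_norm_restr_sq {k : ℕ} (hk : 0 < k) (v : EuclideanSpace ℝ (Fin d)) :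
    ∑ U ∈ powersetCard k univ, ‖restr b U v‖ ^ 2 = ((m - 1).choose (k - 1) : ℝ) * ‖v‖ ^ 2 := by
  simp only [norm_restr_sq]
  rw [sum_comm, EuclideanSpace.norm_sq_eq, mul_sum]
  refine sum_congr rfl fun i _ => ?_
  rw [← sum_filter, sum_const, card_filter_mem_powersetCard (mem_univ _) hk, card_univ,
    Fintype.card_fin, nsmul_eq_mul, Real.norm_eq_abs, sq_abs]

end BlockRestriction

theorem stmt12_general {d m K : ℕ} (b : Fin d → Fin m)
    (kb : ℕ) (hkb : 0 < kb) (hkbm : kb ≤ m)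
    (τ γ L : ℝ) (hτ : τ = (kb : ℝ) / m) (hL : 0 < L)
    (φ : Fin K → EuclideanSpace ℝ (Fin d) → ℝ)
    (G : Fin K → EuclideanSpace ℝ (Fin d) → EuclideanSpace ℝ (Fin d))
    (hconv : ∀ j, ∀ x y : EuclideanSpace ℝ (Fin d),
      φ j x ≥ φ j y + ⟪G j y, x - y⟫)
    (hsmooth : ∀ j, ∀ x y : EuclideanSpace ℝ (Fin d),
      φ j x ≤ φ j y + ⟪G j y, x - y⟫ + L / 2 * ‖x - y‖ ^ 2)
    (α : Fin K → EuclideanSpace ℝ (Fin d))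
    (x xstar : EuclideanSpace ℝ (Fin d))
    (hopt : ∑ j, G j xstar = 0) :
    ((K : ℝ) * (m.choose kb : ℝ))⁻¹ *
      ∑ j, ∑ U ∈ Finset.powersetCard kb (Finset.univ : Finset (Fin m)),
        ‖(x - γ • restr b U (G j x - α j + (K : ℝ)⁻¹ • ∑ j', α j'))
          - ((K : ℝ) * (m.choose kb : ℝ))⁻¹ •
              ∑ j'', ∑ U' ∈ Finset.powersetCard kb (Finset.univ : Finset (Fin m)),
                (x - γ • restr b U' (G j'' x - α j'' + (K : ℝ)⁻¹ • ∑ j', α j'))‖ ^ 2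
      ≤ 2 * γ ^ 2 * τ *
          (2 * L * ((K : ℝ)⁻¹ * ∑ j, φ j x - (K : ℝ)⁻¹ * ∑ j, φ j xstar)
            + (K : ℝ)⁻¹ * ∑ j, ‖α j - G j xstar‖ ^ 2) := by
  set ᾱ := (K : ℝ)⁻¹ • ∑ j', α j'
  set C := ((m - 1).choose (kb - 1) : ℝ)
  have hvar := sum_sum_norm_sub_average_sq_le univ (powersetCard kb univ)
    (fun j U => x - γ • restr b U (G j x - α j + ᾱ)) x
  simp only [card_univ, Fintype.card_fin, card_powersetCard] at hvar
  have hstep : ∀ j, ∑ U ∈ powersetCard kb univ, ‖x - γ • restr b U (G j x - α j + ᾱ) - x‖ ^ 2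
      = γ ^ 2 * (C * ‖G j x - α j + ᾱ‖ ^ 2) := fun j => by
    simp only [sub_sub_cancel_left, norm_neg, norm_smul, mul_pow, Real.norm_eq_abs, sq_abs]
    rw [← mul_sum, sum_powersetCard_norm_restr_sq b hkb]
  have hsaga := sum_norm_saga_sq_le hL φ G hconv hsmooth α x xstar hopt
  rw [Fintype.card_fin] at hsaga
  have hcoef : ((K : ℝ) * m.choose kb)⁻¹ * C = τ * (K : ℝ)⁻¹ := by
    rw [hτ, ← cast_choose_pred_div_cast_choose hkb hkbm, mul_inv]
    ring
  have hτ0 : 0 ≤ τ := hτ ▸ by positivity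
  calc _ ≤ ((K : ℝ) * m.choose kb)⁻¹ *
          ∑ j, ∑ U ∈ powersetCard kb univ, ‖x - γ • restr b U (G j x - α j + ᾱ) - x‖ ^ 2 :=
        mul_le_mul_of_nonneg_left hvar (by positivity)
    _ = τ * (K : ℝ)⁻¹ * γ ^ 2 * ∑ j, ‖G j x - α j + ᾱ‖ ^ 2 := by
        simp only [hstep, ← mul_sum, ← hcoef]
        ring
    _ ≤ τ * (K : ℝ)⁻¹ * γ ^ 2 * (2 * (2 * L * (∑ j, φ j x - ∑ j, φ j xstar))
          + 2 * ∑ j, ‖α j - G j xstar‖ ^ 2) :=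
        mul_le_mul_of_nonneg_left hsaga (by positivity)
    _ = _ := by ring

/-- SAGA variance bound: with `j` uniform in `{1,…,K}`, `U` an independent uniform
size-`τm` block subset (encoded by averaging over both), and
`x⁺ = x − γ(∇φⱼ(x) − αⱼ + ᾱ)_U`, if each `φⱼ` is convex and `L`-smooth and
`φ = (1/K)∑ⱼφⱼ` is minimized at `x⋆` (so `∑ⱼ∇φⱼ(x⋆) = 0`), then
`E‖x⁺ − E x⁺‖² ≤ 2γ²τ(2L(φ(x) − φ(x⋆)) + (1/K)∑ⱼ‖αⱼ − ∇φⱼ(x⋆)‖²)`. -/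
theorem stmt12 {d m K : ℕ} (hK : 0 < K) (b : Fin d → Fin m)
    (kb : ℕ) (hkb : 0 < kb) (hkbm : kb ≤ m)
    (τ γ L : ℝ) (hτ : τ = (kb : ℝ) / m) (hγ : 0 < γ) (hL : 0 < L)
    (φ : Fin K → EuclideanSpace ℝ (Fin d) → ℝ)
    (G : Fin K → EuclideanSpace ℝ (Fin d) → EuclideanSpace ℝ (Fin d))
    (hconv : ∀ j, ∀ x y : EuclideanSpace ℝ (Fin d),
      φ j x ≥ φ j y + ⟪G j y, x - y⟫)
    (hsmooth : ∀ j, ∀ x y : EuclideanSpace ℝ (Fin d),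
      φ j x ≤ φ j y + ⟪G j y, x - y⟫ + L / 2 * ‖x - y‖ ^ 2)
    (α : Fin K → EuclideanSpace ℝ (Fin d))
    (x xstar : EuclideanSpace ℝ (Fin d))
    (hmin : ∀ z, (K : ℝ)⁻¹ * ∑ j, φ j xstar ≤ (K : ℝ)⁻¹ * ∑ j, φ j z)
    (hopt : ∑ j, G j xstar = 0) :
    ((K : ℝ) * (m.choose kb : ℝ))⁻¹ *
      ∑ j, ∑ U ∈ Finset.powersetCard kb (Finset.univ : Finset (Fin m)),
        ‖(x - γ • restr b U (G j x - α j + (K : ℝ)⁻¹ • ∑ j', α j'))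
          - ((K : ℝ) * (m.choose kb : ℝ))⁻¹ •
              ∑ j'', ∑ U' ∈ Finset.powersetCard kb (Finset.univ : Finset (Fin m)),
                (x - γ • restr b U' (G j'' x - α j'' + (K : ℝ)⁻¹ • ∑ j', α j'))‖ ^ 2
      ≤ 2 * γ ^ 2 * τ *
          (2 * L * ((K : ℝ)⁻¹ * ∑ j, φ j x - (K : ℝ)⁻¹ * ∑ j, φ j xstar)
            + (K : ℝ)⁻¹ * ∑ j, ‖α j - G j xstar‖ ^ 2) :=
  stmt12_general b kb hkb hkbm τ γ L hτ hL φ G hconv hsmooth α x xstar hopt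
end
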